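/- arXiv:2309.12069 — 4 statements merged into one kernel-verified Lean document; each statement's English description precedes it below -/
import Mathlib

section
/- For every ε ∈ (0, 1/2] and every u in the unit sphere S^{d-1} of ℝ^d, if W ⊆ S^{d-1} is a maximal ε-separated subset (with respect to the Euclidean norm), then there exists a sequence (w_j)_{j≥0} in W and scalars (γ_j)_{j≥0} with γ_0 = 1 and |γ_j| ≤ ε^j for all j ≥ 1, such that u = ∑_{j≥0} γ_j w_j. -/
open scoped BigOperators

/-- If `W` is a maximal `ε`-separated subset of the unit sphere of `ℝ^d`
(`ε ∈ (0, 1/2]`), then every `u` on the sphere admits a representation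
`u = ∑_{j≥0} γ_j w_j` with `w_j ∈ W`, `γ_0 = 1` and `|γ_j| ≤ ε^j` for `j ≥ 1`. -/
theorem stmt0 (d : ℕ) (ε : ℝ) (hε0 : 0 < ε) (hε : ε ≤ 1 / 2)
    (W : Set (EuclideanSpace ℝ (Fin d)))
    (hWsub : W ⊆ Metric.sphere (0 : EuclideanSpace ℝ (Fin d)) 1)
    (hWsep : ∀ x ∈ W, ∀ y ∈ W, x ≠ y → ε ≤ dist x y)
    (hWmax : ∀ z ∈ Metric.sphere (0 : EuclideanSpace ℝ (Fin d)) 1, ∃ x ∈ W, dist z x < ε)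
    (u : EuclideanSpace ℝ (Fin d)) (hu : u ∈ Metric.sphere (0 : EuclideanSpace ℝ (Fin d)) 1) :
    ∃ (w : ℕ → EuclideanSpace ℝ (Fin d)) (γ : ℕ → ℝ),
      (∀ j, w j ∈ W) ∧ γ 0 = 1 ∧ (∀ j, 1 ≤ j → |γ j| ≤ ε ^ j) ∧
      HasSum (fun j => γ j • w j) u := by
  classical
  have _dummy : True := trivial
  obtain ⟨w₀, hw₀W, _⟩ := hWmax u hu
  -- picking function
  have hsph : ∀ v : EuclideanSpace ℝ (Fin d), v ≠ 0 → (‖v‖⁻¹ • v) ∈ Metric.sphere (0 : EuclideanSpace ℝ (Fin d)) 1 := by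
    intro v hv
    rw [mem_sphere_zero_iff_norm, norm_smul, norm_inv, norm_norm,
      inv_mul_cancel₀ (norm_ne_zero_iff.mpr hv)]
  let pick : EuclideanSpace ℝ (Fin d) → EuclideanSpace ℝ (Fin d) := fun v =>
    if h : v = 0 then w₀ else Classical.choose (hWmax (‖v‖⁻¹ • v) (hsph v h))
  have pickW : ∀ v, pick v ∈ W := by
    intro v
    by_cases h : v = 0
    · simp [pick, h, hw₀W]
    · simpa [pick, h] using (Classical.choose_spec (hWmax (‖v‖⁻¹ • v) (hsph v h))).1
  have pick_close : ∀ v : EuclideanSpace ℝ (Fin d), ‖v - ‖v‖ • pick v‖ ≤ ε * ‖v‖ := by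
    intro v
    by_cases h : v = 0
    · simp [h]
    · have hsp := (Classical.choose_spec (hWmax (‖v‖⁻¹ • v) (hsph v h))).2
      have hne : ‖v‖ ≠ 0 := norm_ne_zero_iff.mpr h
      have : v - ‖v‖ • pick v = ‖v‖ • (‖v‖⁻¹ • v - pick v) := by
        rw [smul_sub, smul_smul, mul_inv_cancel₀ hne, one_smul]
      rw [this, norm_smul, norm_norm, mul_comm]
      have : ‖‖v‖⁻¹ • v - pick v‖ ≤ ε := by
        have := hsp
        rw [dist_eq_norm] at this
        simp only [pick, dif_neg h]
        exact le_of_lt this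
      exact mul_le_mul_of_nonneg_right this (norm_nonneg v)
  -- residuals
  let r : ℕ → EuclideanSpace ℝ (Fin d) := fun n => Nat.rec u (fun _ prev => prev - ‖prev‖ • pick prev) n
  have hr0 : r 0 = u := rfl
  have hrsucc : ∀ n, r (n + 1) = r n - ‖r n‖ • pick (r n) := fun n => rfl
  have hrnorm : ∀ n, ‖r n‖ ≤ ε ^ n := by
    intro n
    induction n with
    | zero => simp [hr0, mem_sphere_zero_iff_norm.mp hu]
    | succ n ih =>
      rw [hrsucc]
      calc ‖r n - ‖r n‖ • pick (r n)‖ ≤ ε * ‖r n‖ := pick_close _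
        _ ≤ ε * ε ^ n := by nlinarith
        _ = ε ^ (n + 1) := by ring
  refine ⟨fun n => pick (r n), fun n => ‖r n‖, fun j => pickW _, by
    simp [hr0, mem_sphere_zero_iff_norm.mp hu], fun j _ => by
    simpa using hrnorm j, ?_⟩
  -- partial sums
  have hpart : ∀ n, ∑ j ∈ Finset.range n, ‖r j‖ • pick (r j) = u - r n := by
    intro n
    induction n with
    | zero => simp [hr0]
    | succ n ih =>
      rw [Finset.sum_range_succ, ih, hrsucc]
      abel
  have hsummable : Summable (fun j => ‖r j‖ • pick (r j)) := by
    apply Summable.of_norm_bounded (g := fun j => ε ^ j)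
      (summable_geometric_of_lt_one hε0.le (by linarith))
    intro j
    rw [norm_smul, norm_norm]
    have hpw : ‖pick (r j)‖ = 1 := mem_sphere_zero_iff_norm.mp (hWsub (pickW (r j)))
    rw [hpw, mul_one]
    exact hrnorm j
  have hs := hsummable.hasSum
  have htend := hs.tendsto_sum_nat
  have hr_tendsto : Filter.Tendsto (fun n => r n) Filter.atTop (nhds 0) := by
    rw [tendsto_zero_iff_norm_tendsto_zero]
    apply squeeze_zero (fun n => norm_nonneg _) hrnorm
    exact tendsto_pow_atTop_nhds_zero_of_lt_one hε0.le (by linarith)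
  have htend2 : Filter.Tendsto (fun n => ∑ j ∈ Finset.range n, ‖r j‖ • pick (r j))
      Filter.atTop (nhds u) := by
    simp only [hpart]
    have := Filter.Tendsto.const_sub u hr_tendsto
    simpa using this
  have : (∑' j, ‖r j‖ • pick (r j)) = u := tendsto_nhds_unique htend htend2
  rwa [this] at hs
end

section
/- Let g₁,…,g_n be iid standard gaussian random variables and let g*_j denote the j-th largest among |g₁|,…,|g_n|. Then there are absolute constants c₃, c₄ > 0 such that for every u ≥ c₃ and every 1 ≤ j ≤ n: P( g*_j ≥ u √(log(en/j)) ) ≤ 2 exp( −c₄ u² j log(en/j) ). -/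
open MeasureTheory ProbabilityTheory Real Set

/-- The non-increasing rearrangement of the absolute values of a vector:
`decRe a j` is the `(j+1)`-th largest among `|a₁|,…,|a_n|`. -/
noncomputable def decRe {n : ℕ} (a : Fin n → ℝ) : Fin n → ℝ :=
  fun i => |a (Tuple.sort (fun j => -|a j|) i)|


lemma integral_xexp {t : ℝ} (ht : 0 < t) :
    IntegrableOn (fun x => x * rexp (-(x^2/2))) (Ioi t) ∧
    ∫ x in Ioi t, x * rexp (-(x^2/2)) = rexp (-(t^2/2)) := by
  have hderiv : ∀ x ∈ Ioi t, HasDerivAt (fun y => -rexp (-(y^2/2)))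
      (x * rexp (-(x^2/2))) x := by
    intro x _
    have h1 : HasDerivAt (fun y : ℝ => -(y^2/2)) (-x) x := by
      have := ((hasDerivAt_pow 2 x).div_const 2).fun_neg
      simpa using this.congr_deriv (by ring)
    have h2 := (h1.exp).fun_neg
    refine h2.congr_deriv ?_
    ring
  have hpos : ∀ x ∈ Ioi t, 0 ≤ x * rexp (-(x^2/2)) := fun x hx =>
    mul_nonneg (le_of_lt (ht.trans hx)) (exp_nonneg _)
  have htend : Filter.Tendsto (fun y => -rexp (-(y^2/2))) Filter.atTop (nhds 0) := by
    rw [← neg_zero]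
    refine Filter.Tendsto.neg ?_
    refine Real.tendsto_exp_atBot.comp ?_
    have h3 : Filter.Tendsto (fun y : ℝ => y^2/2) Filter.atTop Filter.atTop :=
      (Filter.tendsto_pow_atTop two_ne_zero).atTop_div_const (by norm_num)
    exact Filter.tendsto_neg_atBot_iff.mpr h3
  have hcont : ContinuousWithinAt (fun y => -rexp (-(y^2/2))) (Ici t) t :=
    (Continuous.neg (by continuity)).continuousWithinAt
  refine ⟨integrableOn_Ioi_deriv_of_nonneg hcont hderiv hpos htend, ?_⟩
  rw [integral_Ioi_of_hasDerivAt_of_nonneg hcont hderiv hpos htend]; ring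

lemma gauss_Ici {t : ℝ} (ht : 1 ≤ t) :
    gaussianReal 0 1 (Ici t) ≤ ENNReal.ofReal (rexp (-(t^2/2)) / 2) := by
  have ht0 : (0:ℝ) < t := lt_of_lt_of_le one_pos ht
  rw [gaussianReal_apply 0 one_ne_zero]
  calc ∫⁻ x in Ici t, gaussianPDF 0 1 x
      ≤ ∫⁻ x in Ici t, ENNReal.ofReal (x * rexp (-(x^2/2)) / 2) := by
        refine setLIntegral_mono (by measurability) (fun x hx => ?_)
        rw [gaussianPDF_def]
        refine ENNReal.ofReal_le_ofReal ?_
        rw [gaussianPDFReal_def]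
        dsimp only
        have h1 : (Real.sqrt (2 * Real.pi * (1:NNReal)))⁻¹ ≤ 1/2 := by
          have h2le : (2:ℝ) ≤ Real.sqrt (2 * Real.pi * (1:NNReal)) := by
            rw [Real.le_sqrt (by norm_num) (by positivity)]
            have := Real.pi_gt_three
            push_cast
            nlinarith
          rw [show (1:ℝ)/2 = (2:ℝ)⁻¹ by norm_num]
          exact inv_anti₀ (by norm_num) h2le
        have h2 : rexp (-(x - 0) ^ 2 / (2 * (1:NNReal))) = rexp (-(x^2/2)) := by
          push_cast; ring_nf
        rw [h2]
        have hx1 : (1:ℝ) ≤ x := le_trans ht hx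
        have := exp_nonneg (-(x^2/2))
        nlinarith
    _ = ENNReal.ofReal (rexp (-(t^2/2)) / 2) := by
        obtain ⟨hint, hval⟩ := integral_xexp ht0
        have hint' : IntegrableOn (fun x => x * rexp (-(x^2/2)) / 2) (Ici t) := by
          rw [integrableOn_Ici_iff_integrableOn_Ioi]
          exact hint.div_const 2
        have hnn : 0 ≤ᵐ[volume.restrict (Ici t)] fun x => x * rexp (-(x^2/2)) / 2 := by
          rw [Filter.EventuallyLE, ae_restrict_iff' measurableSet_Ici]
          refine Filter.Eventually.of_forall (fun x hx => ?_)
          have : (0:ℝ) < x := lt_of_lt_of_le ht0 hx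
          positivity
        rw [← ofReal_integral_eq_lintegral_ofReal hint' hnn]
        congr 1
        rw [integral_Ici_eq_integral_Ioi, integral_div, hval]

lemma gauss_tail {t : ℝ} (ht : 1 ≤ t) :
    gaussianReal 0 1 {x : ℝ | t ≤ |x|} ≤ ENNReal.ofReal (rexp (-(t^2/2))) := by
  have hsub : {x : ℝ | t ≤ |x|} ⊆ Iic (-t) ∪ Ici t := by
    intro x hx
    simp only [Set.mem_setOf_eq] at hx
    rcases le_abs.mp hx with h | h
    · exact Or.inr h
    · exact Or.inl (by simpa using neg_le_neg h)
  have hmap : (gaussianReal 0 1).map (fun x => (-1 : ℝ) * x) = gaussianReal 0 1 := by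
    rw [gaussianReal_map_const_mul]
    norm_num
  have hsym : gaussianReal 0 1 (Iic (-t)) = gaussianReal 0 1 (Ici t) := by
    conv_lhs => rw [← hmap]
    rw [Measure.map_apply (by fun_prop) measurableSet_Iic]
    congr 1
    ext x
    simp only [Set.mem_preimage, Set.mem_Iic, Set.mem_Ici, neg_one_mul]
    constructor <;> intro <;> linarith
  calc gaussianReal 0 1 {x : ℝ | t ≤ |x|}
      ≤ gaussianReal 0 1 (Iic (-t) ∪ Ici t) := measure_mono hsub
    _ ≤ gaussianReal 0 1 (Iic (-t)) + gaussianReal 0 1 (Ici t) := measure_union_le _ _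
    _ ≤ ENNReal.ofReal (rexp (-(t^2/2)) / 2) + ENNReal.ofReal (rexp (-(t^2/2)) / 2) := by
        rw [hsym]
        exact add_le_add (gauss_Ici ht) (gauss_Ici ht)
    _ = ENNReal.ofReal (rexp (-(t^2/2))) := by
        rw [← ENNReal.ofReal_add (by positivity) (by positivity)]
        ring_nf

lemma decRe_count {n : ℕ} (a : Fin n → ℝ) (j : Fin n) {t : ℝ}
    (h : t ≤ decRe a j) :
    ∃ S : Finset (Fin n), S.card = (j : ℕ) + 1 ∧ ∀ i ∈ S, t ≤ |a i| := by
  set σ := Tuple.sort (fun i => -|a i|) with hσ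
  refine ⟨(Finset.Iic j).image σ, ?_, ?_⟩
  · rw [Finset.card_image_of_injective _ σ.injective, Fin.card_Iic]
  · intro i hi
    obtain ⟨i', hi', rfl⟩ := Finset.mem_image.mp hi
    have hmono := Tuple.monotone_sort (fun i => -|a i|) (Finset.mem_Iic.mp hi')
    simp only [Function.comp_apply] at hmono
    have : |a (σ j)| ≤ |a (σ i')| := by linarith
    exact le_trans h this

/-- For iid standard gaussians `g₁,…,g_n` and the order statistics
`g*_j` of their absolute values, there are absolute constants `c₃, c₄ > 0` such that
for every `u ≥ c₃` and every `j`: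
`P(g*_j ≥ u√(log(en/j))) ≤ 2exp(−c₄u²j log(en/j))`. -/
theorem stmt16 :
    ∃ c₃ c₄ : ℝ, 0 < c₃ ∧ 0 < c₄ ∧
      ∀ (n : ℕ) (Ω : Type) (_mΩ : MeasurableSpace Ω) (P : Measure Ω),
        IsProbabilityMeasure P →
      ∀ (g : Fin n → Ω → ℝ),
        (∀ i, Measurable (g i)) →
        iIndepFun g P →
        (∀ i, Measure.map (g i) P = gaussianReal 0 1) →
        ∀ (u : ℝ), c₃ ≤ u → ∀ j : Fin n,
          P {ω | u * Real.sqrt (Real.log (Real.exp 1 * n / ((j : ℕ) + 1))) ≤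
              decRe (fun i => g i ω) j} ≤
            ENNReal.ofReal (2 * Real.exp (-(c₄ * u ^ 2 * ((j : ℕ) + 1) *
              Real.log (Real.exp 1 * n / ((j : ℕ) + 1))))) := by
  refine ⟨2, 1/4, by norm_num, by norm_num, ?_⟩
  intro n Ω mΩ P hP g hmeas hind hmap u hu j
  set k : ℕ := (j : ℕ) + 1 with hk
  have hkcast : ((j : ℕ) : ℝ) + 1 = (k : ℝ) := by rw [hk]; push_cast; ring
  rw [hkcast]
  set L : ℝ := Real.log (Real.exp 1 * n / (k : ℝ)) with hL
  set t : ℝ := u * Real.sqrt L with htdef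
  -- basic facts
  have hkpos : 0 < k := Nat.succ_pos _
  have hkn : k ≤ n := j.isLt
  have hkR : (0:ℝ) < (k:ℝ) := by exact_mod_cast hkpos
  have hknR : (k:ℝ) ≤ (n:ℝ) := by exact_mod_cast hkn
  have hbase : Real.exp 1 ≤ Real.exp 1 * n / (k : ℝ) := by
    rw [le_div_iff₀ hkR]
    have := Real.exp_pos 1
    nlinarith
  have hL1 : 1 ≤ L := by
    calc (1:ℝ) = Real.log (Real.exp 1) := (Real.log_exp 1).symm
    _ ≤ L := Real.log_le_log (Real.exp_pos 1) hbase
  have hL0 : 0 ≤ L := le_trans zero_le_one hL1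
  have hs1 : 1 ≤ Real.sqrt L := by
    rw [show (1:ℝ) = Real.sqrt 1 by simp]
    exact Real.sqrt_le_sqrt hL1
  have ht1 : 1 ≤ t := by nlinarith
  have ht2 : t^2 = u^2 * L := by
    rw [htdef, mul_pow, Real.sq_sqrt hL0]
  set A : Set ℝ := {x : ℝ | t ≤ |x|} with hAdef
  have hA : MeasurableSet A := measurableSet_le measurable_const measurable_abs
  set q : ℝ := rexp (-(t^2/2)) with hq
  have hq0 : 0 ≤ q := le_of_lt (Real.exp_pos _)
  -- inclusion into union over subsets
  have hsub : {ω | t ≤ decRe (fun i => g i ω) j} ⊆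
      ⋃ S ∈ Finset.powersetCard k (Finset.univ : Finset (Fin n)),
        ⋂ i ∈ S, g i ⁻¹' A := by
    intro ω hω
    obtain ⟨S, hScard, hS⟩ := decRe_count (fun i => g i ω) j hω
    refine Set.mem_biUnion (Finset.mem_powersetCard.mpr ⟨Finset.subset_univ _, hScard⟩) ?_
    exact Set.mem_iInter₂.mpr (fun i hi => hS i hi)
  -- per-subset bound
  have hterm : ∀ S ∈ Finset.powersetCard k (Finset.univ : Finset (Fin n)),
      P (⋂ i ∈ S, g i ⁻¹' A) ≤ ENNReal.ofReal (q ^ k) := by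
    intro S hS
    have hScard : S.card = k := (Finset.mem_powersetCard.mp hS).2
    rw [hind.meas_biInter (fun i _ => ⟨A, hA, rfl⟩)]
    have hone : ∀ i, P (g i ⁻¹' A) ≤ ENNReal.ofReal q := by
      intro i
      have : P (g i ⁻¹' A) = gaussianReal 0 1 A := by
        rw [← hmap i, Measure.map_apply (hmeas i) hA]
      rw [this]
      exact gauss_tail ht1
    calc ∏ i ∈ S, P (g i ⁻¹' A) ≤ ∏ _i ∈ S, ENNReal.ofReal q :=
          Finset.prod_le_prod' (fun i _ => hone i)
      _ = ENNReal.ofReal q ^ k := by rw [Finset.prod_const, hScard]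
      _ = ENNReal.ofReal (q ^ k) := (ENNReal.ofReal_pow hq0 k).symm
  -- real-number estimate
  have hreal : (n.choose k : ℝ) * q ^ k ≤ 2 * Real.exp (-(1/4 * u^2 * (k:ℝ) * L)) := by
    have hfac : (0:ℝ) < (k.factorial : ℝ) := by exact_mod_cast k.factorial_pos
    have hkk : ((k:ℝ))^k / (k.factorial : ℝ) ≤ Real.exp 1 ^ k := by
      have h1 : ((k:ℝ))^k / (k.factorial : ℝ) ≤
          ∑ i ∈ Finset.range (k+1), (k:ℝ)^i / (i.factorial : ℝ) := by
        refine Finset.single_le_sum (f := fun i => (k:ℝ)^i / (i.factorial : ℝ))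
          (fun i _ => by positivity) (Finset.self_mem_range_succ k)
      refine h1.trans ?_
      have h2 := Real.sum_le_exp_of_nonneg (le_of_lt hkR) (k+1)
      rw [← Real.exp_nat_mul, mul_one]
      exact h2
    have hchoose : (n.choose k : ℝ) ≤ (Real.exp 1 * n / (k:ℝ))^k := by
      calc (n.choose k : ℝ) ≤ (n:ℝ)^k / (k.factorial : ℝ) := Nat.choose_le_pow_div k n
        _ ≤ (Real.exp 1 * n / (k:ℝ))^k := by
            rw [div_pow, mul_pow, div_le_div_iff₀ hfac (pow_pos hkR k)]
            have hkk' : ((k:ℝ))^k ≤ Real.exp 1 ^ k * (k.factorial : ℝ) := by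
              rw [div_le_iff₀ hfac] at hkk; exact hkk
            have hnk : (0:ℝ) ≤ (n:ℝ)^k := by positivity
            nlinarith
    have hexpL : (Real.exp 1 * n / (k:ℝ))^k = Real.exp ((k:ℝ) * L) := by
      have hn0 : (0:ℝ) < (n:ℝ) := lt_of_lt_of_le hkR hknR
      rw [Real.exp_nat_mul, Real.exp_log (div_pos (mul_pos (Real.exp_pos 1) hn0) hkR)]
    have hqk : q ^ k = Real.exp ((k:ℝ) * (-(t^2/2))) := by
      rw [Real.exp_nat_mul]
    have hqknn : (0:ℝ) ≤ q ^ k := by positivity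
    calc (n.choose k : ℝ) * q ^ k ≤ Real.exp ((k:ℝ) * L) * q ^ k := by
          refine mul_le_mul_of_nonneg_right ?_ hqknn
          rw [← hexpL]; exact hchoose
      _ = Real.exp ((k:ℝ) * L + (k:ℝ) * (-(t^2/2))) := by rw [hqk, ← Real.exp_add]
      _ ≤ 2 * Real.exp (-(1/4 * u^2 * (k:ℝ) * L)) := by
          have hkR0 : (0:ℝ) ≤ (k:ℝ) := le_of_lt hkR
          have harg : (k:ℝ) * L + (k:ℝ) * (-(t^2/2)) ≤ -(1/4 * u^2 * (k:ℝ) * L) := by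
            rw [ht2]
            have hu4 : (4:ℝ) ≤ u^2 := by nlinarith
            nlinarith [mul_nonneg (show (0:ℝ) ≤ u^2 - 4 by linarith)
              (mul_nonneg hkR0 hL0)]
          calc Real.exp ((k:ℝ) * L + (k:ℝ) * (-(t^2/2)))
              ≤ Real.exp (-(1/4 * u^2 * (k:ℝ) * L)) := Real.exp_le_exp.mpr harg
            _ ≤ 2 * Real.exp (-(1/4 * u^2 * (k:ℝ) * L)) := by
                have := Real.exp_pos (-(1/4 * u^2 * (k:ℝ) * L))
                linarith
  -- assemble
  calc P {ω | t ≤ decRe (fun i => g i ω) j}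
      ≤ P (⋃ S ∈ Finset.powersetCard k (Finset.univ : Finset (Fin n)),
          ⋂ i ∈ S, g i ⁻¹' A) := measure_mono hsub
    _ ≤ ∑ S ∈ Finset.powersetCard k (Finset.univ : Finset (Fin n)),
          P (⋂ i ∈ S, g i ⁻¹' A) := measure_biUnion_finset_le _ _
    _ ≤ ∑ _S ∈ Finset.powersetCard k (Finset.univ : Finset (Fin n)),
          ENNReal.ofReal (q ^ k) := Finset.sum_le_sum hterm
    _ = (n.choose k : ENNReal) * ENNReal.ofReal (q ^ k) := by
        rw [Finset.sum_const, Finset.card_powersetCard, Finset.card_univ,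
          Fintype.card_fin, nsmul_eq_mul]
    _ ≤ ENNReal.ofReal (2 * Real.exp (-(1/4 * u^2 * (k:ℝ) * L))) := by
        rw [← ENNReal.ofReal_natCast (n.choose k),
          ← ENNReal.ofReal_mul (by positivity)]
        exact ENNReal.ofReal_le_ofReal hreal
end

section
/- Let (Y_j)_{j=1}^n be iid real random variables with E Y*_j + c₁ ≥ c₅ √(log(en/j)) for all j (where Y*_j is the j-th largest of |Y₁|,…,|Y_n| and c₁, c₅ > 0), and let g₁,…,g_n be iid standard gaussians. Then E max_{1≤j≤n} g*_j / (E Y*_j + c₁) ≤ C for a constant C depending only on c₁, c₅. -/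
open MeasureTheory ProbabilityTheory

open Real Set
open scoped ENNReal

lemma decRe_nonneg {n : ℕ} (a : Fin n → ℝ) (j : Fin n) : 0 ≤ decRe a j := abs_nonneg _

lemma decRe_ge_iff {n : ℕ} (a : Fin n → ℝ) (j : Fin n) (t : ℝ) :
    t ≤ decRe a j ↔ ∃ S : Finset (Fin n), S.card = (j : ℕ) + 1 ∧ ∀ i ∈ S, t ≤ |a i| := by
  set σ := Tuple.sort (fun k => -|a k|) with hσ
  have hm : Monotone ((fun k => -|a k|) ∘ σ) := Tuple.monotone_sort _
  constructor
  · intro ht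
    refine ⟨(Finset.Iic j).image σ, ?_, ?_⟩
    · rw [Finset.card_image_of_injective _ σ.injective, Fin.card_Iic]
    · intro i hi
      obtain ⟨i', hi', rfl⟩ := Finset.mem_image.mp hi
      have h1 : -|a (σ i')| ≤ -|a (σ j)| := hm (Finset.mem_Iic.mp hi')
      have : |a (σ j)| ≤ |a (σ i')| := by linarith
      exact ht.trans this
  · rintro ⟨S, hcard, hS⟩
    have hT : (S.image σ.symm).card = (j : ℕ) + 1 := by
      rw [Finset.card_image_of_injective _ σ.symm.injective, hcard]
    have : ¬ (S.image σ.symm ⊆ Finset.Iio j) := by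
      intro hsub
      have := Finset.card_le_card hsub
      rw [hT, Fin.card_Iio] at this
      omega
    obtain ⟨m, hmS, hmj⟩ := by
      simpa [Finset.subset_iff, Finset.mem_Iio, not_lt] using this
    have h1 : -|a (σ j)| ≤ -|a (σ (σ.symm m))| := hm hmj
    have h2 : |a (σ (σ.symm m))| = |a m| := by simp
    have h3 : t ≤ |a m| := hS m hmS
    rw [h2] at h1
    unfold decRe
    rw [← hσ]
    linarith

lemma measurable_decRe {n : ℕ} {Ω} [MeasurableSpace Ω] (g : Fin n → Ω → ℝ)
    (hg : ∀ i, Measurable (g i)) (j : Fin n) :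
    Measurable fun ω => decRe (fun i => g i ω) j := by
  apply measurable_of_Ici
  intro t
  have : (fun ω => decRe (fun i => g i ω) j) ⁻¹' Set.Ici t
      = ⋃ S ∈ Finset.univ.powersetCard ((j : ℕ) + 1), ⋂ i ∈ S, {ω | t ≤ |g i ω|} := by
    ext ω
    simp only [Set.mem_preimage, Set.mem_Ici, decRe_ge_iff, Set.mem_iUnion, Set.mem_iInter,
      Finset.mem_powersetCard, Set.mem_setOf_eq]
    constructor
    · rintro ⟨S, h1, h2⟩; exact ⟨S, ⟨Finset.subset_univ _, h1⟩, h2⟩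
    · rintro ⟨S, ⟨_, h1⟩, h2⟩; exact ⟨S, h1, h2⟩
  rw [this]
  refine MeasurableSet.biUnion (Finset.countable_toSet _) fun S _ =>
    MeasurableSet.biInter (Finset.countable_toSet _) fun i _ => ?_
  exact measurableSet_le measurable_const (hg i).abs

lemma gaussian_abs_tail {t : ℝ} (ht : 0 ≤ t) :
    gaussianReal 0 1 {x | t ≤ |x|} ≤ ENNReal.ofReal (Real.sqrt 2 * rexp (-t ^ 2 / 4)) := by
  rw [gaussianReal_apply _ one_ne_zero]
  have hb : (0 : ℝ) < 1 / 4 := by norm_num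
  set c : ℝ := (Real.sqrt (2 * π))⁻¹ * rexp (-t ^ 2 / 4) with hc
  have hcnn : 0 ≤ c := by positivity
  have key : ∀ x ∈ {x : ℝ | t ≤ |x|}, gaussianPDF 0 1 x ≤
      ENNReal.ofReal (c * rexp (-(1 / 4) * x ^ 2)) := by
    intro x hx
    simp only [Set.mem_setOf_eq] at hx
    have hx2 : t ^ 2 ≤ x ^ 2 := by
      have := sq_abs x
      nlinarith [abs_nonneg x]
    unfold gaussianPDF gaussianPDFReal
    apply ENNReal.ofReal_le_ofReal
    push_cast
    rw [hc]
    have hexp : rexp (-(x - 0) ^ 2 / (2 * 1)) ≤ rexp (-t ^ 2 / 4) * rexp (-(1 / 4) * x ^ 2) := by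
      rw [← Real.exp_add]
      apply Real.exp_le_exp.mpr
      nlinarith
    calc (√(2 * π * 1))⁻¹ * rexp (-(x - 0) ^ 2 / (2 * 1))
        ≤ (√(2 * π))⁻¹ * (rexp (-t ^ 2 / 4) * rexp (-(1 / 4) * x ^ 2)) := by
          rw [mul_one]
          exact mul_le_mul_of_nonneg_left hexp (by positivity)
      _ = (√(2 * π))⁻¹ * rexp (-t ^ 2 / 4) * rexp (-(1 / 4) * x ^ 2) := by ring
  have h1 : ∫⁻ x in {x | t ≤ |x|}, gaussianPDF 0 1 x
      ≤ ∫⁻ x, ENNReal.ofReal (c * rexp (-(1 / 4) * x ^ 2)) := by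
    refine le_trans (setLIntegral_mono' ?_ key) (setLIntegral_le_lintegral _ _)
    exact (isClosed_le continuous_const continuous_abs).measurableSet
  have hint : Integrable (fun x : ℝ => c * rexp (-(1 / 4) * x ^ 2)) :=
    (integrable_exp_neg_mul_sq hb).const_mul c
  have h2 : ∫⁻ x, ENNReal.ofReal (c * rexp (-(1 / 4) * x ^ 2))
      = ENNReal.ofReal (∫ x, c * rexp (-(1 / 4) * x ^ 2)) := by
    rw [ofReal_integral_eq_lintegral_ofReal hint (ae_of_all _ fun x => by positivity)]
  have h3 : (∫ x, c * rexp (-(1 / 4) * x ^ 2)) = c * Real.sqrt (π / (1 / 4)) := by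
    rw [MeasureTheory.integral_const_mul, integral_gaussian]
  refine h1.trans ?_
  rw [h2, h3]
  apply ENNReal.ofReal_le_ofReal
  have hπ : 0 < π := pi_pos
  have e1 : Real.sqrt (π / (1 / 4)) = 2 * Real.sqrt π := by
    rw [show π / (1 / 4) = 4 * π by ring, Real.sqrt_mul (by norm_num),
      show (4 : ℝ) = 2 ^ 2 by norm_num, Real.sqrt_sq (by norm_num)]
  have e2 : Real.sqrt (2 * π) = Real.sqrt 2 * Real.sqrt π := Real.sqrt_mul (by norm_num) _
  rw [hc, e1, e2]
  have h2pos : (0:ℝ) < Real.sqrt 2 := Real.sqrt_pos.mpr (by norm_num)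
  have hπpos : (0:ℝ) < Real.sqrt π := Real.sqrt_pos.mpr hπ
  have : (Real.sqrt 2 * Real.sqrt π)⁻¹ * (2 * Real.sqrt π) = Real.sqrt 2 := by
    rw [mul_inv]
    have : Real.sqrt 2 * Real.sqrt 2 = 2 := Real.mul_self_sqrt (by norm_num)
    field_simp
    nlinarith
  calc (Real.sqrt 2 * Real.sqrt π)⁻¹ * rexp (-t ^ 2 / 4) * (2 * Real.sqrt π)
      = ((Real.sqrt 2 * Real.sqrt π)⁻¹ * (2 * Real.sqrt π)) * rexp (-t ^ 2 / 4) := by ring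
    _ = Real.sqrt 2 * rexp (-t ^ 2 / 4) := by rw [this]
    _ ≤ Real.sqrt 2 * rexp (-t ^ 2 / 4) := le_refl _

lemma choose_tail_bound (n k : ℕ) (hk1 : 1 ≤ k) (hkn : k ≤ n) {u : ℝ} (hu : 6 ≤ u) :
    (n.choose k : ℝ) *
      (Real.sqrt 2 * rexp (-(u * Real.sqrt (Real.log (rexp 1 * n / k))) ^ 2 / 4)) ^ k
      ≤ rexp (-((k : ℝ) * u)) := by
  have hn1 : 1 ≤ n := hk1.trans hkn
  have hkpos : (0:ℝ) < k := by exact_mod_cast hk1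
  have hnpos : (0:ℝ) < n := by exact_mod_cast hn1
  set L : ℝ := Real.log (rexp 1 * n / k) with hLdef
  have hX : rexp 1 ≤ rexp 1 * n / k := by
    rw [mul_div_assoc]
    nth_rewrite 1 [← mul_one (rexp 1)]
    apply mul_le_mul_of_nonneg_left _ (Real.exp_pos 1).le
    rw [le_div_iff₀ hkpos]
    simpa using (by exact_mod_cast hkn : (k:ℝ) ≤ n)
  have hL1 : 1 ≤ L := by
    have := Real.log_le_log (Real.exp_pos 1) hX
    rwa [Real.log_exp] at this
  have hL0 : 0 ≤ L := by linarith
  have hsq : (u * Real.sqrt L) ^ 2 = u ^ 2 * L := by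
    rw [mul_pow, Real.sq_sqrt hL0]
  -- choose bound
  have hfact : (k : ℝ) ^ k / (k.factorial : ℝ) ≤ rexp k := by
    calc (k : ℝ) ^ k / (k.factorial : ℝ)
        ≤ ∑ i ∈ Finset.range (k + 1), (k : ℝ) ^ i / (i.factorial : ℝ) := by
          exact Finset.single_le_sum (f := fun i => (k : ℝ) ^ i / (i.factorial : ℝ))
            (fun i _ => by positivity) (Finset.self_mem_range_succ k)
      _ ≤ rexp k := by
          simpa using Real.sum_le_exp_of_nonneg (by positivity : (0:ℝ) ≤ (k:ℝ)) (k+1)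
  have hchoose : (n.choose k : ℝ) ≤ rexp ((k : ℝ) * L) := by
    have h1 : (n.choose k : ℝ) ≤ (n : ℝ) ^ k / (k.factorial : ℝ) := Nat.choose_le_pow_div k n
    have hfpos : (0:ℝ) < (k.factorial : ℝ) := by exact_mod_cast k.factorial_pos
    have h2 : (n : ℝ) ^ k / (k.factorial : ℝ) ≤ rexp 1 ^ k * (n : ℝ) ^ k / (k : ℝ) ^ k := by
      rw [div_le_div_iff₀ hfpos (by positivity)]
      calc (n:ℝ)^k * (k:ℝ)^k = ((k:ℝ)^k / (k.factorial:ℝ)) * (k.factorial:ℝ) * (n:ℝ)^k := by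
            field_simp
        _ ≤ rexp k * (k.factorial:ℝ) * (n:ℝ)^k := by
            apply mul_le_mul_of_nonneg_right _ (by positivity)
            exact mul_le_mul_of_nonneg_right hfact hfpos.le
        _ = rexp 1 ^ k * (n:ℝ)^k * (k.factorial:ℝ) := by
            rw [← Real.exp_one_pow]; ring
    have h3 : rexp 1 ^ k * (n : ℝ) ^ k / (k : ℝ) ^ k = (rexp 1 * n / k) ^ k := by
      rw [div_pow, mul_pow]
    have h4 : (rexp 1 * n / k) ^ k = rexp ((k:ℝ) * L) := by
      rw [hLdef, ← Real.exp_log (show (0:ℝ) < rexp 1 * n / k by positivity)]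
      rw [← Real.exp_nat_mul]
      rw [Real.log_exp]
    calc (n.choose k : ℝ) ≤ _ := h1
      _ ≤ _ := h2
      _ = _ := by rw [h3, h4]
  -- second factor
  have hsqrt2 : Real.sqrt 2 ≤ rexp 1 := by
    have h2 : (2:ℝ) ≤ rexp 1 := by
      have := Real.add_one_le_exp 1
      linarith
    have h4 : Real.sqrt 4 = 2 := by
      rw [show (4:ℝ) = 2^2 by norm_num, Real.sqrt_sq (by norm_num)]
    calc Real.sqrt 2 ≤ Real.sqrt 4 := Real.sqrt_le_sqrt (by norm_num)
      _ = 2 := h4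
      _ ≤ rexp 1 := h2
  have hpow : (Real.sqrt 2 * rexp (-(u * Real.sqrt L) ^ 2 / 4)) ^ k
      ≤ rexp ((k:ℝ) * (1 - u ^ 2 * L / 4)) := by
    have hbase : Real.sqrt 2 * rexp (-(u * Real.sqrt L) ^ 2 / 4)
        ≤ rexp (1 - u ^ 2 * L / 4) := by
      rw [hsq, show (1 : ℝ) - u ^ 2 * L / 4 = 1 + -(u ^ 2 * L) / 4 by ring, Real.exp_add]
      apply mul_le_mul_of_nonneg_right hsqrt2 (Real.exp_pos _).le
    calc (Real.sqrt 2 * rexp (-(u * Real.sqrt L) ^ 2 / 4)) ^ k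
        ≤ rexp (1 - u ^ 2 * L / 4) ^ k := by
          apply pow_le_pow_left₀ (by positivity) hbase
      _ = rexp ((k:ℝ) * (1 - u ^ 2 * L / 4)) := (Real.exp_nat_mul _ k).symm
  calc (n.choose k : ℝ) * (Real.sqrt 2 * rexp (-(u * Real.sqrt L) ^ 2 / 4)) ^ k
      ≤ rexp ((k:ℝ) * L) * rexp ((k:ℝ) * (1 - u ^ 2 * L / 4)) := by
        apply mul_le_mul hchoose hpow (by positivity) (Real.exp_pos _).le
    _ = rexp ((k:ℝ) * L + (k:ℝ) * (1 - u ^ 2 * L / 4)) := (Real.exp_add _ _).symm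
    _ ≤ rexp (-((k : ℝ) * u)) := by
        apply Real.exp_le_exp.mpr
        have hk1' : (1:ℝ) ≤ (k:ℝ) := by exact_mod_cast hk1
        have hq : (0:ℝ) ≤ u ^ 2 / 4 - 1 := by nlinarith
        have h2' : (u ^ 2 / 4 - 1) ≤ L * (u ^ 2 / 4 - 1) := le_mul_of_one_le_left hq hL1
        have h6u : u * 6 ≤ u * u := mul_le_mul_of_nonneg_left hu (by linarith)
        have key : L + (1 - u ^ 2 * L / 4) + u ≤ 0 := by nlinarith
        nlinarith [mul_le_mul_of_nonneg_left key hkpos.le]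

lemma orderstat_tail {n : ℕ} {Ω : Type} [MeasurableSpace Ω] {P : Measure Ω}
    (g : Fin n → Ω → ℝ) (hg : ∀ i, Measurable (g i))
    (hindep : iIndepFun g P)
    (hmap : ∀ i, Measure.map (g i) P = gaussianReal 0 1)
    (j : Fin n) (t : ℝ) :
    P {ω | t ≤ decRe (fun i => g i ω) j}
      ≤ (n.choose ((j : ℕ) + 1) : ℝ≥0∞) * (gaussianReal 0 1 {x | t ≤ |x|}) ^ ((j : ℕ) + 1) := by
  set B : Set ℝ := {x | t ≤ |x|} with hB
  have hBmeas : MeasurableSet B := (isClosed_le continuous_const continuous_abs).measurableSet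
  set k := (j : ℕ) + 1 with hk
  have hsub : {ω | t ≤ decRe (fun i => g i ω) j}
      ⊆ ⋃ S ∈ Finset.univ.powersetCard k, ⋂ i ∈ S, g i ⁻¹' B := by
    intro ω hω
    obtain ⟨S, hcard, hS⟩ := (decRe_ge_iff _ j t).mp hω
    simp only [Set.mem_iUnion, Set.mem_iInter]
    exact ⟨S, by simp [Finset.mem_powersetCard, hcard, hk], fun i hi => hS i hi⟩
  calc P {ω | t ≤ decRe (fun i => g i ω) j}
      ≤ P (⋃ S ∈ Finset.univ.powersetCard k, ⋂ i ∈ S, g i ⁻¹' B) := measure_mono hsub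
    _ ≤ ∑ S ∈ Finset.univ.powersetCard k, P (⋂ i ∈ S, g i ⁻¹' B) :=
        measure_biUnion_finset_le _ _
    _ ≤ ∑ _S ∈ Finset.univ.powersetCard k, (gaussianReal 0 1 B) ^ k := by
        apply Finset.sum_le_sum
        intro S hS
        have hScard : S.card = k := (Finset.mem_powersetCard.mp hS).2
        rw [hindep.measure_inter_preimage_eq_mul S (sets := fun _ => B) (fun i _ => hBmeas)]
        have heach : ∀ i ∈ S, P (g i ⁻¹' B) = gaussianReal 0 1 B := by
          intro i _
          rw [← hmap i, Measure.map_apply (hg i) hBmeas]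
        rw [Finset.prod_congr rfl heach, Finset.prod_const, hScard]
    _ = (n.choose k : ℝ≥0∞) * (gaussianReal 0 1 B) ^ k := by
        rw [Finset.sum_const, Finset.card_powersetCard, Finset.card_univ, Fintype.card_fin,
          nsmul_eq_mul]

lemma exp_tail_lintegral (k : ℕ) (hk : 1 ≤ k) :
    ∫⁻ s in Ioi (0:ℝ), ENNReal.ofReal (rexp (-((k : ℝ) * (6 + s))))
      ≤ ENNReal.ofReal (rexp (-(k : ℝ))) := by
  have hk1 : (1:ℝ) ≤ (k:ℝ) := by exact_mod_cast hk
  have step1 : ∫⁻ s in Ioi (0:ℝ), ENNReal.ofReal (rexp (-((k : ℝ) * (6 + s))))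
      ≤ ∫⁻ s in Ioi (0:ℝ), ENNReal.ofReal (rexp (-(k:ℝ)) * rexp (-s)) := by
    apply setLIntegral_mono' measurableSet_Ioi
    intro s hs
    simp only [mem_Ioi] at hs
    apply ENNReal.ofReal_le_ofReal
    rw [← Real.exp_add]
    apply Real.exp_le_exp.mpr
    nlinarith
  refine step1.trans ?_
  have step2 : ∫⁻ s in Ioi (0:ℝ), ENNReal.ofReal (rexp (-(k:ℝ)) * rexp (-s))
      = ENNReal.ofReal (rexp (-(k:ℝ))) * ∫⁻ s in Ioi (0:ℝ), ENNReal.ofReal (rexp (-s)) := by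
    simp_rw [ENNReal.ofReal_mul (Real.exp_pos _).le]
    rw [lintegral_const_mul' _ _ ENNReal.ofReal_ne_top]
  rw [step2]
  have step3 : ∫⁻ s in Ioi (0:ℝ), ENNReal.ofReal (rexp (-s)) = 1 := by
    have hint : IntegrableOn (fun s : ℝ => rexp (-s)) (Ioi 0) := by
      simpa using exp_neg_integrableOn_Ioi 0 (zero_lt_one)
    rw [← ofReal_integral_eq_lintegral_ofReal hint (ae_of_all _ fun s => (Real.exp_pos _).le)]
    rw [integral_exp_neg_Ioi_zero]
    simp
  rw [step3, mul_one]

lemma expectation_piece {n : ℕ} {Ω : Type} [MeasurableSpace Ω] {P : Measure Ω}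
    (g : Fin n → Ω → ℝ) (hg : ∀ i, Measurable (g i))
    (hindep : iIndepFun g P)
    (hmap : ∀ i, Measure.map (g i) P = gaussianReal 0 1)
    (j : Fin n) :
    ∫⁻ ω, ENNReal.ofReal (max (decRe (fun i => g i ω) j /
        Real.sqrt (Real.log (rexp 1 * n / ((j : ℕ) + 1))) - 6) 0) ∂P
      ≤ ENNReal.ofReal (rexp (-(((j : ℕ) : ℝ) + 1))) := by
  set k := (j : ℕ) + 1 with hkdef
  have hk1 : 1 ≤ k := Nat.le_add_left 1 _
  have hkn : k ≤ n := j.isLt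
  have hn1 : 1 ≤ n := hk1.trans hkn
  set L : ℝ := Real.log (rexp 1 * n / ((j : ℕ) + 1)) with hLdef
  have hLk : L = Real.log (rexp 1 * n / (k : ℕ)) := by
    rw [hLdef, hkdef]; push_cast; ring_nf
  have hL1 : 1 ≤ L := by
    rw [hLk]
    have hkpos : (0:ℝ) < (k:ℝ) := by exact_mod_cast hk1
    have hX : rexp 1 ≤ rexp 1 * n / k := by
      rw [mul_div_assoc]
      nth_rewrite 1 [← mul_one (rexp 1)]
      apply mul_le_mul_of_nonneg_left _ (Real.exp_pos 1).le
      rw [le_div_iff₀ hkpos]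
      simpa using (by exact_mod_cast hkn : (k:ℝ) ≤ n)
    have := Real.log_le_log (Real.exp_pos 1) hX
    rwa [Real.log_exp] at this
  have hsL : (0:ℝ) < Real.sqrt L := Real.sqrt_pos.mpr (by linarith)
  set W : Ω → ℝ := fun ω => decRe (fun i => g i ω) j / Real.sqrt L with hWdef
  have hWmeas : Measurable W := (measurable_decRe g hg j).div_const _
  set φ : Ω → ℝ := fun ω => max (W ω - 6) 0 with hφdef
  have hφmeas : Measurable φ := (hWmeas.sub_const 6).max measurable_const
  have hφnn : ∀ ω, 0 ≤ φ ω := fun ω => le_max_right _ _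
  have hlayer : ∫⁻ ω, ENNReal.ofReal (φ ω) ∂P = ∫⁻ s in Ioi (0:ℝ), P {ω | s < φ ω} := by
    exact lintegral_eq_lintegral_meas_lt P (ae_of_all _ hφnn) hφmeas.aemeasurable
  have htail : ∀ s : ℝ, s ∈ Ioi (0:ℝ) →
      P {ω | s < φ ω} ≤ ENNReal.ofReal (rexp (-((k : ℝ) * (6 + s)))) := by
    intro s hs
    simp only [mem_Ioi] at hs
    have hu : (6:ℝ) ≤ 6 + s := by linarith
    set t : ℝ := (6 + s) * Real.sqrt L with htdef
    have ht0 : 0 ≤ t := by positivity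
    have hsub : {ω | s < φ ω} ⊆ {ω | t ≤ decRe (fun i => g i ω) j} := by
      intro ω hω
      simp only [Set.mem_setOf_eq, hφdef] at hω ⊢
      have h1 : s < W ω - 6 := by
        rcases max_cases (W ω - 6) 0 with ⟨heq, _⟩ | ⟨heq, _⟩
        · rwa [heq] at hω
        · rw [heq] at hω; linarith
      have h2 : 6 + s ≤ W ω := by linarith
      rw [hWdef] at h2
      rw [htdef]
      calc (6 + s) * Real.sqrt L ≤ (decRe (fun i => g i ω) j / Real.sqrt L) * Real.sqrt L := by
            apply mul_le_mul_of_nonneg_right h2 hsL.le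
        _ = decRe (fun i => g i ω) j := by field_simp
    calc P {ω | s < φ ω} ≤ P {ω | t ≤ decRe (fun i => g i ω) j} := measure_mono hsub
      _ ≤ (n.choose k : ℝ≥0∞) * (gaussianReal 0 1 {x | t ≤ |x|}) ^ k :=
          orderstat_tail g hg hindep hmap j t
      _ ≤ (n.choose k : ℝ≥0∞) * (ENNReal.ofReal (Real.sqrt 2 * rexp (-t ^ 2 / 4))) ^ k := by
          apply mul_le_mul_right
          exact pow_le_pow_left' (gaussian_abs_tail ht0) k
      _ = ENNReal.ofReal ((n.choose k : ℝ) * (Real.sqrt 2 * rexp (-t ^ 2 / 4)) ^ k) := by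
          conv_rhs => rw [ENNReal.ofReal_mul (by positivity : (0:ℝ) ≤ (n.choose k : ℝ)),
            ENNReal.ofReal_pow (by positivity), ENNReal.ofReal_natCast]
      _ ≤ ENNReal.ofReal (rexp (-((k : ℝ) * (6 + s)))) := by
          apply ENNReal.ofReal_le_ofReal
          have := choose_tail_bound n k hk1 hkn hu
          rw [← hLk] at this
          rw [htdef]
          exact this
  have : ∫⁻ s in Ioi (0:ℝ), P {ω | s < φ ω}
      ≤ ∫⁻ s in Ioi (0:ℝ), ENNReal.ofReal (rexp (-((k : ℝ) * (6 + s)))) :=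
    setLIntegral_mono' measurableSet_Ioi htail
  have hfinal := this.trans (exp_tail_lintegral k hk1)
  rw [hlayer]
  refine hfinal.trans_eq ?_
  congr 2
  simp [hkdef]

/-- If `(Y_j)` are iid real random variables whose order statistics
satisfy `E Y*_j + c₁ ≥ c₅√(log(en/j))`, and `g₁,…,g_n` are iid standard gaussians, then
`E max_j g*_j/(E Y*_j + c₁) ≤ C` for a constant `C` depending only on `c₁, c₅`. -/
theorem stmt17 (c₁ c₅ : ℝ) (hc₁ : 0 < c₁) (hc₅ : 0 < c₅) :
    ∃ C : ℝ, 0 < C ∧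
      ∀ (n : ℕ)
        (Ω : Type) (_mΩ : MeasurableSpace Ω) (P : Measure Ω), IsProbabilityMeasure P →
      ∀ (Ω' : Type) (_mΩ' : MeasurableSpace Ω') (P' : Measure Ω'), IsProbabilityMeasure P' →
      ∀ (g : Fin n → Ω → ℝ) (Y : Fin n → Ω' → ℝ),
        -- g₁,…,g_n iid standard gaussians
        (∀ i, Measurable (g i)) →
        iIndepFun g P →
        (∀ i, Measure.map (g i) P = gaussianReal 0 1) →
        -- Y₁,…,Y_n iid
        (∀ i, Measurable (Y i)) →
        iIndepFun Y P' →
        (∀ i j, Measure.map (Y i) P' = Measure.map (Y j) P') →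
        -- lower bound on the expected order statistics of Y
        (∀ j : Fin n, c₅ * Real.sqrt (Real.log (Real.exp 1 * n / ((j : ℕ) + 1))) ≤
          (∫ ω', decRe (fun i => Y i ω') j ∂P') + c₁) →
        ∫ ω, (⨆ j : Fin n, decRe (fun i => g i ω) j /
            ((∫ ω', decRe (fun i => Y i ω') j ∂P') + c₁)) ∂P ≤ C := by
  refine ⟨7 / c₅, by positivity, ?_⟩
  intro n Ω _mΩ P hP Ω' _mΩ' P' hP' g Y hgmeas hgindep hgmap hYmeas hYindep hYid hlow
  rcases Nat.eq_zero_or_pos n with hn | hn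
  · subst hn
    have hz : ∀ ω : Ω, (⨆ j : Fin 0, decRe (fun i => g i ω) j /
        ((∫ ω', decRe (fun i => Y i ω') j ∂P') + c₁)) = 0 := fun ω => Real.iSup_of_isEmpty _
    rw [show (fun ω : Ω => (⨆ j : Fin 0, decRe (fun i => g i ω) j /
        ((∫ ω', decRe (fun i => Y i ω') j ∂P') + c₁))) = fun _ => (0:ℝ) from funext hz]
    rw [integral_zero]
    positivity
  haveI : Nonempty (Fin n) := ⟨⟨0, hn⟩⟩
  set L : Fin n → ℝ := fun j => Real.log (Real.exp 1 * n / ((j : ℕ) + 1)) with hLdef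
  set D : Fin n → ℝ := fun j => (∫ ω', decRe (fun i => Y i ω') j ∂P') + c₁ with hDdef
  have hLD : ∀ j, c₅ * Real.sqrt (L j) ≤ D j := hlow
  have hL1 : ∀ j, 1 ≤ L j := by
    intro j
    have hkpos : (0:ℝ) < ((j : ℕ) : ℝ) + 1 := by positivity
    have hjn : ((j : ℕ) : ℝ) + 1 ≤ (n : ℝ) := by exact_mod_cast j.isLt
    have hX : rexp 1 ≤ rexp 1 * n / (((j : ℕ) : ℝ) + 1) := by
      rw [mul_div_assoc]
      nth_rewrite 1 [← mul_one (rexp 1)]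
      apply mul_le_mul_of_nonneg_left _ (Real.exp_pos 1).le
      rw [le_div_iff₀ hkpos]
      simpa using hjn
    have := Real.log_le_log (Real.exp_pos 1) hX
    rwa [Real.log_exp] at this
  have hsL : ∀ j, 1 ≤ Real.sqrt (L j) := by
    intro j
    rw [show (1:ℝ) = Real.sqrt 1 by simp]
    exact Real.sqrt_le_sqrt (hL1 j)
  have hsLpos : ∀ j, 0 < Real.sqrt (L j) := fun j => lt_of_lt_of_le one_pos (hsL j)
  have hDpos : ∀ j, 0 < D j := by
    intro j
    have : c₅ * 1 ≤ c₅ * Real.sqrt (L j) := by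
      apply mul_le_mul_of_nonneg_left (hsL j) hc₅.le
    have := this.trans (hLD j)
    linarith
  set W : Fin n → Ω → ℝ := fun j ω => decRe (fun i => g i ω) j / Real.sqrt (L j) with hWdef
  set φ : Fin n → Ω → ℝ := fun j ω => max (W j ω - 6) 0 with hφdef
  have hφmeas : ∀ j, Measurable (φ j) := fun j =>
    (((measurable_decRe g hgmeas j).div_const _).sub_const 6).max measurable_const
  have hφnn : ∀ j ω, 0 ≤ φ j ω := fun j ω => le_max_right _ _
  set Z : Ω → ℝ := fun ω => ⨆ j, decRe (fun i => g i ω) j / D j with hZdef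
  have hZmeas : Measurable Z :=
    Measurable.iSup fun j => (measurable_decRe g hgmeas j).div_const _
  have hZnn : ∀ ω, 0 ≤ Z ω := fun ω =>
    Real.iSup_nonneg fun j => div_nonneg (decRe_nonneg _ _) (hDpos j).le
  have hpt : ∀ ω, Z ω ≤ 6 / c₅ + (1 / c₅) * ∑ j, φ j ω := by
    intro ω
    apply ciSup_le
    intro j
    have h1 : decRe (fun i => g i ω) j / D j
        ≤ decRe (fun i => g i ω) j / (c₅ * Real.sqrt (L j)) :=
      div_le_div_of_nonneg_left (decRe_nonneg _ _) (mul_pos hc₅ (hsLpos j)) (hLD j)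
    have h2 : decRe (fun i => g i ω) j / (c₅ * Real.sqrt (L j)) = W j ω / c₅ := by
      rw [hWdef]
      rw [div_mul_eq_div_div_swap]
    have h3 : W j ω ≤ 6 + φ j ω := by
      rcases max_cases (W j ω - 6) 0 with ⟨heq, _⟩ | ⟨heq, hle⟩
      · rw [hφdef]; simp only; rw [heq]; linarith
      · rw [hφdef]; simp only; rw [heq]; linarith
    have h4 : φ j ω ≤ ∑ j', φ j' ω :=
      Finset.single_le_sum (f := fun j' => φ j' ω) (fun j' _ => hφnn j' ω) (Finset.mem_univ j)
    have h5 : W j ω / c₅ ≤ (6 + ∑ j', φ j' ω) / c₅ :=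
      (div_le_div_iff_of_pos_right hc₅).mpr (by linarith)
    calc decRe (fun i => g i ω) j / D j ≤ W j ω / c₅ := h1.trans_eq h2
      _ ≤ (6 + ∑ j', φ j' ω) / c₅ := h5
      _ = 6 / c₅ + (1 / c₅) * ∑ j', φ j' ω := by ring
  -- integral bound
  have hsum_exp : ∑ j : Fin n, rexp (-(((j : ℕ) : ℝ) + 1)) ≤ 1 := by
    have hhalf : rexp (-1) ≤ 1 / 2 := by
      have h2 : (2:ℝ) ≤ rexp 1 := by have := Real.add_one_le_exp 1; linarith
      rw [Real.exp_neg]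
      rw [inv_le_comm₀ _ (by norm_num)]
      · simpa using h2
      · exact Real.exp_pos 1
    calc ∑ j : Fin n, rexp (-(((j : ℕ) : ℝ) + 1))
        = ∑ j ∈ Finset.range n, rexp (-((j : ℝ) + 1)) := by
          rw [Fin.sum_univ_eq_sum_range (fun j => rexp (-((j : ℝ) + 1)))]
      _ ≤ ∑ j ∈ Finset.range n, (1 / 2 : ℝ) ^ (j + 1) := by
          apply Finset.sum_le_sum
          intro j _
          have : rexp (-((j : ℝ) + 1)) = rexp (-1) ^ (j + 1) := by
            rw [← Real.exp_nat_mul]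
            congr 1
            push_cast; ring
          rw [this]
          exact pow_le_pow_left₀ (Real.exp_pos _).le hhalf (j + 1)
      _ = (∑ j ∈ Finset.range n, (1 / 2 : ℝ) ^ j) * (1 / 2) := by
          rw [Finset.sum_mul]
          apply Finset.sum_congr rfl
          intro j _
          rw [pow_succ]
      _ ≤ 2 * (1 / 2) := by
          apply mul_le_mul_of_nonneg_right (sum_geometric_two_le n) (by norm_num)
      _ = 1 := by norm_num
  rw [integral_eq_lintegral_of_nonneg_ae (ae_of_all _ hZnn) hZmeas.aestronglyMeasurable]
  apply ENNReal.toReal_le_of_le_ofReal (by positivity)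
  calc ∫⁻ ω, ENNReal.ofReal (Z ω) ∂P
      ≤ ∫⁻ ω, (ENNReal.ofReal (6 / c₅)
          + ENNReal.ofReal (1 / c₅) * ∑ j, ENNReal.ofReal (φ j ω)) ∂P := by
        apply lintegral_mono
        intro ω
        calc ENNReal.ofReal (Z ω) ≤ ENNReal.ofReal (6 / c₅ + (1 / c₅) * ∑ j, φ j ω) :=
              ENNReal.ofReal_le_ofReal (hpt ω)
          _ = ENNReal.ofReal (6 / c₅) + ENNReal.ofReal (1 / c₅) * ∑ j, ENNReal.ofReal (φ j ω) := by
              rw [ENNReal.ofReal_add (by positivity)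
                  (mul_nonneg (by positivity) (Finset.sum_nonneg fun j _ => hφnn j ω)),
                ENNReal.ofReal_mul (by positivity),
                ENNReal.ofReal_sum_of_nonneg (fun j _ => hφnn j ω)]
    _ = ENNReal.ofReal (6 / c₅) + ENNReal.ofReal (1 / c₅) * ∑ j, ∫⁻ ω, ENNReal.ofReal (φ j ω) ∂P := by
        rw [lintegral_add_left measurable_const, lintegral_const, measure_univ, mul_one,
          lintegral_const_mul' _ _ ENNReal.ofReal_ne_top,
          lintegral_finset_sum _ (fun j _ => (hφmeas j).ennreal_ofReal)]
    _ ≤ ENNReal.ofReal (6 / c₅) + ENNReal.ofReal (1 / c₅) * ∑ j : Fin n,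
          ENNReal.ofReal (rexp (-(((j : ℕ) : ℝ) + 1))) := by
        apply add_le_add_right
        apply mul_le_mul_right
        apply Finset.sum_le_sum
        intro j _
        exact expectation_piece g hgmeas hgindep hgmap j
    _ ≤ ENNReal.ofReal (6 / c₅) + ENNReal.ofReal (1 / c₅) * ENNReal.ofReal 1 := by
        apply add_le_add_right
        apply mul_le_mul_right
        rw [← ENNReal.ofReal_sum_of_nonneg (fun j _ => (Real.exp_pos _).le)]
        exact ENNReal.ofReal_le_ofReal hsum_exp
    _ = ENNReal.ofReal (7 / c₅) := by
        rw [← ENNReal.ofReal_mul (by positivity), mul_one,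
          ← ENNReal.ofReal_add (by positivity) (by positivity)]
        congr 1
        rw [← add_div]
        norm_num
end

section
/- Let ε = (ε_i)_{i=1}^m be a uniform random sign vector, and let I' ⊆ {1,…,m} with |I'| ≥ 2(u² + 1) for a real u > 0, and let a > 0. Then with probability at least c₁ exp(−c₂ u²), we have |(1/√m) ∑_{i∈I'} a ε_i| ≥ c₃ a u √(|I'|/(2m)), where c₁, c₂, c₃ are absolute constants. -/
open scoped BigOperators
open Finset


lemma castchoose (m k : ℕ) : ((k:ℝ)+1) * (m+1).choose (k+1) = ((m:ℝ)+1) * m.choose k := by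
  have h := congrArg (Nat.cast (R := ℝ)) (Nat.add_one_mul_choose_eq m k)
  push_cast at h
  linarith

lemma sumchoose (m : ℕ) : ∑ k ∈ range (m+1), (m.choose k : ℝ) = 2^m := by
  exact_mod_cast Nat.sum_range_choose m

lemma sumA (n : ℕ) : ∑ k ∈ range (n+1), (k:ℝ) * n.choose k = (n:ℝ) * 2^n / 2 := by
  cases n with
  | zero => simp
  | succ m =>
    rw [Finset.sum_range_succ']
    have h : ∀ k ∈ range (m+1), ((k+1:ℕ):ℝ) * (m+1).choose (k+1) = ((m:ℝ)+1) * m.choose k := by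
      intro k _; push_cast; exact_mod_cast castchoose m k
    rw [Finset.sum_congr rfl h, ← Finset.mul_sum, sumchoose]
    push_cast; ring

lemma sumB (n : ℕ) : ∑ k ∈ range (n+1), (k:ℝ) * ((k:ℝ)-1) * n.choose k
    = (n:ℝ) * ((n:ℝ)-1) * 2^n / 4 := by
  cases n with
  | zero => simp
  | succ m =>
    rw [Finset.sum_range_succ']
    have h : ∀ k ∈ range (m+1), ((k+1:ℕ):ℝ) * (((k+1:ℕ):ℝ)-1) * ((m+1).choose (k+1) : ℝ)
        = ((m:ℝ)+1) * ((k:ℝ) * m.choose k) := by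
      intro k _
      have := castchoose m k
      push_cast
      nlinarith [this]
    rw [Finset.sum_congr rfl h, ← Finset.mul_sum, sumA]
    push_cast; ring

lemma sumSq (n : ℕ) : ∑ k ∈ range (n+1), ((n:ℝ) - 2*k)^2 * n.choose k = (n:ℝ) * 2^n := by
  have e : ∀ k ∈ range (n+1), ((n:ℝ) - 2*k)^2 * (n.choose k : ℝ)
      = (n:ℝ)^2 * n.choose k - (4*(n:ℝ)-4) * ((k:ℝ) * n.choose k)
        + 4 * ((k:ℝ) * ((k:ℝ)-1) * n.choose k) := by
    intro k _; ring
  rw [Finset.sum_congr rfl e]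
  rw [Finset.sum_add_distrib, Finset.sum_sub_distrib, ← Finset.mul_sum, ← Finset.mul_sum,
    ← Finset.mul_sum, sumchoose, sumA, sumB]
  ring


lemma choose_shift (n k : ℕ) (q : ℝ) (hq : 0 < q) (w : ℕ) (hkw : k + w ≤ n)
    (h : ∀ j, j < w → q * ((k:ℝ) + j + 1) ≤ (n:ℝ) - (k + j)) :
    q^w * n.choose k ≤ n.choose (k + w) := by
  induction w with
  | zero => simp
  | succ w ih =>
    have hkw' : k + w ≤ n := by omega
    have ihh := ih (by omega) (fun j hj => h j (by omega))
    have hid := congrArg (Nat.cast (R := ℝ)) (Nat.choose_succ_right_eq n (k + w))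
    push_cast [Nat.cast_sub (le_trans hkw' (le_refl n))] at hid
    -- hid : C(n,k+w+1) * (k+w+1) = C(n,k+w) * (n - (k+w))
    have hstep : q * n.choose (k+w) ≤ n.choose (k+w+1) := by
      have h1 := h w (by omega)
      have hpos : (0:ℝ) < (k:ℝ) + w + 1 := by positivity
      have hC : (0:ℝ) ≤ n.choose (k+w) := by positivity
      nlinarith [hid]
    calc q^(w+1) * n.choose k = q * (q^w * n.choose k) := by ring
      _ ≤ q * n.choose (k+w) := by nlinarith
      _ ≤ n.choose (k+w+1) := hstep
      _ = n.choose (k + (w+1)) := by ring_nf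


-- Step A : central mass
lemma central_mass (n : ℕ) (hn : 1 ≤ n) :
    (3/8) * 2^n ≤
      ∑ k ∈ (range (n+1)).filter
        (fun k : ℕ => ((n:ℝ) - 2*(k:ℝ))^2 < 4*(n:ℝ) ∧ (n:ℝ) ≤ 2*(k:ℝ)), (n.choose k : ℝ) := by
  set c1 : ℕ → Prop := fun k => ((n:ℝ) - 2*(k:ℝ))^2 < 4*(n:ℝ) with hc1
  have hnpos : (0:ℝ) < n := by exact_mod_cast hn
  have A1 : ∑ k ∈ (range (n+1)).filter (fun k => ¬ c1 k), (n.choose k : ℝ) ≤ 2^n / 4 := by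
    have h1 : ∀ k ∈ (range (n+1)).filter (fun k => ¬ c1 k),
        4*(n:ℝ) * (n.choose k : ℝ) ≤ ((n:ℝ) - 2*k)^2 * n.choose k := by
      intro k hk
      have h := (mem_filter.mp hk).2
      simp only [hc1, not_lt] at h
      have hC : (0:ℝ) ≤ (n.choose k : ℝ) := by positivity
      nlinarith
    have h2 : ∑ k ∈ (range (n+1)).filter (fun k => ¬ c1 k), ((n:ℝ) - 2*k)^2 * n.choose k
        ≤ (n:ℝ) * 2^n := by
      rw [← sumSq n]
      apply Finset.sum_le_sum_of_subset_of_nonneg (filter_subset _ _)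
      intro i _ _; positivity
    have h3 := Finset.sum_le_sum h1
    rw [← Finset.mul_sum] at h3
    nlinarith [h3.trans h2]
  have A2 : (3/4) * 2^n ≤ ∑ k ∈ (range (n+1)).filter c1, (n.choose k : ℝ) := by
    have := Finset.sum_filter_add_sum_filter_not (range (n+1)) c1 (fun k => (n.choose k : ℝ))
    rw [sumchoose n] at this
    linarith
  have A3 : ∑ k ∈ (range (n+1)).filter (fun k => c1 k ∧ 2*(k:ℝ) ≤ (n:ℝ)), (n.choose k : ℝ)
      = ∑ k ∈ (range (n+1)).filter (fun k => c1 k ∧ (n:ℝ) ≤ 2*(k:ℝ)), (n.choose k : ℝ) := by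
    apply Finset.sum_nbij' (fun k => n - k) (fun k => n - k)
    · intro k hk
      have hm := mem_filter.mp hk
      have hkr := mem_range.mp hm.1
      have hkc := hm.2.1
      have hkl := hm.2.2
      have hkn : k ≤ n := by omega
      have hcast : ((n - k : ℕ) : ℝ) = (n:ℝ) - k := by
        push_cast [Nat.cast_sub hkn]; ring
      refine mem_filter.mpr ⟨mem_range.mpr (by omega), ?_, ?_⟩
      · simp only [hc1, hcast] at *; nlinarith
      · rw [hcast]; linarith
    · intro k hk
      have hm := mem_filter.mp hk
      have hkr := mem_range.mp hm.1
      have hkc := hm.2.1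
      have hkl := hm.2.2
      have hkn : k ≤ n := by omega
      have hcast : ((n - k : ℕ) : ℝ) = (n:ℝ) - k := by
        push_cast [Nat.cast_sub hkn]; ring
      refine mem_filter.mpr ⟨mem_range.mpr (by omega), ?_, ?_⟩
      · simp only [hc1, hcast] at *; nlinarith
      · rw [hcast]; linarith
    · intro k hk
      have hkn := mem_range.mp (mem_filter.mp hk).1
      omega
    · intro k hk
      have hkn := mem_range.mp (mem_filter.mp hk).1
      omega
    · intro k hk
      have hkn : k ≤ n := by
        have := mem_range.mp (mem_filter.mp hk).1; omega
      rw [Nat.choose_symm hkn]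
  have A4 := Finset.sum_filter_add_sum_filter_not ((range (n+1)).filter c1)
      (fun k : ℕ => (n:ℝ) ≤ 2*(k:ℝ)) (fun k => (n.choose k : ℝ))
  rw [Finset.filter_filter, Finset.filter_filter] at A4
  have A5 : ∑ k ∈ (range (n+1)).filter (fun k => c1 k ∧ ¬ ((n:ℝ) ≤ 2*(k:ℝ))), (n.choose k : ℝ)
      ≤ ∑ k ∈ (range (n+1)).filter (fun k => c1 k ∧ 2*(k:ℝ) ≤ (n:ℝ)), (n.choose k : ℝ) := by
    apply Finset.sum_le_sum_of_subset_of_nonneg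
    · apply Finset.monotone_filter_right
      intro k _ hk; exact ⟨hk.1, by linarith [not_le.mp hk.2]⟩
    · intro i _ _; positivity
  rw [A3] at A5
  have : (3/8)*2^n ≤ ∑ k ∈ (range (n+1)).filter (fun k => c1 k ∧ (n:ℝ) ≤ 2*(k:ℝ)), (n.choose k : ℝ) := by
    linarith
  exact this

lemma wy_bound (u s wR Nq : ℝ) (hu : 0 < u) (hs9 : 9 ≤ s)
    (hw0 : 0 ≤ wR) (hws : wR ≤ u*s/2 + 1) (hNq : s^2/8 ≤ Nq) :
    wR * (2*(s + wR)) ≤ (16*u^2 + 160) * Nq := by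
  nlinarith [sq_nonneg (u*s - s), sq_nonneg (u*s - 1), sq_nonneg (s - 1),
    mul_pos hu (lt_of_lt_of_le (by norm_num : (0:ℝ) < 9) hs9)]


set_option maxHeartbeats 1000000 in
lemma core (n : ℕ) (u : ℝ) (hu : 0 < u) (hn : 2*(u^2+1) ≤ (n:ℝ)) :
    (3/8) * Real.exp (-160) * Real.exp (-(16*u^2)) * 2^n
      ≤ ∑ k ∈ (range (n+1)).filter
          (fun k : ℕ => u * Real.sqrt ((n:ℝ)/2) ≤ |2*(k:ℝ) - (n:ℝ)|), (n.choose k : ℝ) := by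
  have hn2 : (2:ℝ) ≤ n := by nlinarith
  have hnn : (0:ℝ) ≤ n := by linarith
  set r := Real.sqrt ((n:ℝ)/2) with hr
  have hr0 : 0 ≤ r := Real.sqrt_nonneg _
  have hr2 : r^2 = (n:ℝ)/2 := Real.sq_sqrt (by linarith)
  clear_value r
  have hur : u ≤ r := by nlinarith
  have hexp1 : Real.exp (-(16*u^2)) ≤ 1 := by
    rw [Real.exp_le_one_iff]; nlinarith
  by_cases hbig : 99 ≤ n
  · -- main case
    have hn99 : (99:ℝ) ≤ n := by exact_mod_cast hbig
    set s := Real.sqrt (n:ℝ) with hs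
    have hs0 : 0 ≤ s := Real.sqrt_nonneg _
    have hs2 : s^2 = (n:ℝ) := Real.sq_sqrt hnn
    clear_value s
    have hs9 : 9 ≤ s := by nlinarith
    have hs9' : s ≤ (n:ℝ)/9 := by nlinarith
    have hrs : r ≤ s := by nlinarith
    set w : ℕ := ⌈u*r/2⌉₊ with hwdef
    have hw1 : u*r/2 ≤ (w:ℝ) := Nat.le_ceil _
    have hw2 : (w:ℝ) < u*r/2 + 1 := Nat.ceil_lt_add_one (by positivity)
    clear_value w
    have hw0 : 0 ≤ (w:ℝ) := by positivity
    have hwn4 : (w:ℝ) ≤ (n:ℝ)/4 + 1 := by nlinarith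
    have hws : (w:ℝ) ≤ u*s/2 + 1 := by nlinarith
    set Dq : ℝ := (n:ℝ)/2 + s + w with hDq
    set Nq : ℝ := (n:ℝ)/2 - s - w with hNq
    clear_value Dq Nq
    have hNq8 : (n:ℝ)/8 ≤ Nq := by nlinarith
    have hNq0 : 0 < Nq := by linarith
    have hDq0 : 0 < Dq := by nlinarith
    have hDN : Dq = Nq + 2*(s + w) := by rw [hDq, hNq]; ring
    set q : ℝ := Nq/Dq with hq
    clear_value q
    have hq0 : 0 < q := by rw [hq]; positivity
    -- per-element shift
    have key : ∀ k ∈ (range (n+1)).filter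
        (fun k : ℕ => ((n:ℝ) - 2*(k:ℝ))^2 < 4*(n:ℝ) ∧ (n:ℝ) ≤ 2*(k:ℝ)),
        k + w ≤ n ∧ q^w * n.choose k ≤ n.choose (k + w) := by
      intro k hk
      have hm := mem_filter.mp hk
      have hkc := hm.2.1
      have hkl := hm.2.2
      have hks : (k:ℝ) < (n:ℝ)/2 + s := by nlinarith
      have hkwn : (k:ℝ) + w < (n:ℝ) := by nlinarith
      have hkwn' : k + w ≤ n := by
        have h9 : ((k + w : ℕ):ℝ) < (n:ℝ) := by push_cast; linarith
        exact le_of_lt (by exact_mod_cast h9)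
      refine ⟨hkwn', ?_⟩
      apply choose_shift n k q hq0 w hkwn'
      intro j hj
      have hjw : (j:ℝ) ≤ (w:ℝ) - 1 := by
        have : (j:ℝ) + 1 ≤ w := by exact_mod_cast Nat.succ_le_of_lt hj
        linarith
      have h1 : (k:ℝ) + j + 1 ≤ Dq := by rw [hDq]; nlinarith
      have h2 : Nq ≤ (n:ℝ) - ((k:ℝ) + j) := by rw [hNq]; nlinarith
      calc q * ((k:ℝ) + j + 1) ≤ q * Dq := by
            apply mul_le_mul_of_nonneg_left h1 hq0.le
        _ = Nq := by rw [hq]; field_simp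
        _ ≤ (n:ℝ) - ((k:ℝ) + j) := h2
    -- q^w lower bound
    set y : ℝ := 2*(s + w)/Nq with hy
    clear_value y
    have hy0 : 0 ≤ y := by rw [hy]; positivity
    have h1y : 1 + y = Dq/Nq := by rw [hy, hDN]; field_simp
    have hqy : q * (1+y) = 1 := by
      rw [hq, h1y]; field_simp
    have hwy : (w:ℝ) * y ≤ 16*u^2 + 160 := by
      rw [hy]
      have hrw : (w:ℝ) * (2*(s + w)/Nq) = ((w:ℝ) * (2*(s+w)))/Nq := by ring
      rw [hrw, div_le_iff₀ hNq0]
      exact wy_bound u s w Nq hu hs9 hw0 hws (by nlinarith)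
    have hqw : Real.exp (-(16*u^2+160)) ≤ q^w := by
      have h1ye : 1 + y ≤ Real.exp y := by linarith [Real.add_one_le_exp y]
      have h2 : (1+y)^w ≤ Real.exp y ^ w := pow_le_pow_left₀ (by linarith) h1ye w
      have h4 : (1+y)^w ≤ Real.exp (16*u^2+160) := by
        rw [← Real.exp_nat_mul] at h2
        exact h2.trans (Real.exp_le_exp.mpr hwy)
      have h5 : q^w * (1+y)^w = 1 := by rw [← mul_pow, hqy, one_pow]
      have key1 : 1 ≤ q^w * Real.exp (16*u^2+160) := by
        have hqwpos : 0 ≤ q^w := by positivity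
        nlinarith
      rw [Real.exp_neg, inv_eq_one_div, div_le_iff₀ (Real.exp_pos _)]
      linarith [key1, mul_comm (q^w) (Real.exp (16*u^2+160))]
    -- assemble
    set M := (range (n+1)).filter
        (fun k : ℕ => ((n:ℝ) - 2*(k:ℝ))^2 < 4*(n:ℝ) ∧ (n:ℝ) ≤ 2*(k:ℝ)) with hM
    have hsub : M.image (· + w) ⊆ (range (n+1)).filter
        (fun k : ℕ => u * r ≤ |2*(k:ℝ) - (n:ℝ)|) := by
      intro k' hk'
      obtain ⟨k, hk, rfl⟩ := mem_image.mp hk'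
      have hkw := (key k hk).1
      have hm := mem_filter.mp hk
      have hkl := hm.2.2
      refine mem_filter.mpr ⟨mem_range.mpr (by omega), ?_⟩
      have h2w : u * r ≤ 2*(w:ℝ) := by linarith
      have hx : u * r ≤ 2*((k:ℝ)+(w:ℝ)) - (n:ℝ) := by linarith
      have hcst : (((k + w : ℕ)):ℝ) = (k:ℝ) + w := by push_cast; ring
      rw [hcst]
      exact hx.trans (le_abs_self _)
    have himg := Finset.sum_image (s := M) (g := fun k => k + w)
      (f := fun k => (n.choose k : ℝ))
      (fun x _ y _ h => Nat.add_right_cancel h)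
    have step1 : ∑ k ∈ M, (n.choose (k + w) : ℝ)
        ≤ ∑ k ∈ (range (n+1)).filter (fun k : ℕ => u * r ≤ |2*(k:ℝ) - (n:ℝ)|),
            (n.choose k : ℝ) := by
      rw [← himg]
      exact Finset.sum_le_sum_of_subset_of_nonneg hsub (by intro i _ _; positivity)
    have step2 : ∑ k ∈ M, q^w * (n.choose k : ℝ) ≤ ∑ k ∈ M, (n.choose (k + w) : ℝ) :=
      Finset.sum_le_sum (fun k hk => (key k hk).2)
    rw [← Finset.mul_sum] at step2
    have step3 := central_mass n (by omega)
    rw [← hM] at step3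
    have hqwpos : 0 < q^w := by positivity
    have chain : Real.exp (-(16*u^2+160)) * ((3/8) * 2^n)
        ≤ ∑ k ∈ (range (n+1)).filter (fun k : ℕ => u * r ≤ |2*(k:ℝ) - (n:ℝ)|),
            (n.choose k : ℝ) := by
      calc Real.exp (-(16*u^2+160)) * ((3/8) * 2^n)
          ≤ q^w * ((3/8) * 2^n) := by
            apply mul_le_mul_of_nonneg_right hqw (by positivity)
        _ ≤ q^w * ∑ k ∈ M, (n.choose k : ℝ) := by
            apply mul_le_mul_of_nonneg_left step3 hqwpos.le
        _ ≤ _ := step2.trans step1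
    calc (3/8) * Real.exp (-160) * Real.exp (-(16*u^2)) * 2^n
        = Real.exp (-(16*u^2+160)) * ((3/8) * 2^n) := by
          rw [show (-(16*u^2+160) : ℝ) = -160 + -(16*u^2) by ring, Real.exp_add]; ring
      _ ≤ _ := chain
  · -- small case : n ≤ 98
    push_neg at hbig
    have hn98 : (n:ℝ) ≤ 98 := by exact_mod_cast Nat.lt_succ_iff.mp (by omega)
    have hmem : n ∈ (range (n+1)).filter
        (fun k : ℕ => u * r ≤ |2*(k:ℝ) - (n:ℝ)|) := by
      refine mem_filter.mpr ⟨self_mem_range_succ n, ?_⟩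
      have habs : |2*(n:ℝ) - n| = (n:ℝ) := by rw [abs_of_nonneg (by linarith)]; ring
      rw [habs]
      nlinarith
    have hone : (1:ℝ) ≤ ∑ k ∈ (range (n+1)).filter
        (fun k : ℕ => u * r ≤ |2*(k:ℝ) - (n:ℝ)|), (n.choose k : ℝ) := by
      have h := Finset.single_le_sum (f := fun k => (n.choose k : ℝ))
        (by intro i _; positivity) hmem
      exact le_trans (by norm_num) h
    have hLHS : (3/8) * Real.exp (-160) * Real.exp (-(16*u^2)) * 2^n ≤ 1 := by
      have h2n : (2:ℝ)^n ≤ 2^98 := by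
        apply pow_le_pow_right₀ (by norm_num) (by omega)
      have he : (2:ℝ)^98 ≤ Real.exp 98 := by
        calc (2:ℝ)^98 ≤ Real.exp 1 ^ 98 := by
              apply pow_le_pow_left₀ (by norm_num)
              linarith [Real.add_one_le_exp 1]
          _ = Real.exp 98 := by
              rw [← Real.exp_nat_mul]; norm_num
      have hmul : Real.exp (-160) * 2^n ≤ Real.exp (-160) * Real.exp 98 := by
        apply mul_le_mul_of_nonneg_left (h2n.trans he) (Real.exp_pos _).le
      rw [← Real.exp_add] at hmul
      have h62 : Real.exp (-160 + 98) ≤ 1 := by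
        rw [Real.exp_le_one_iff]; norm_num
      nlinarith [Real.exp_pos (-(16*u^2)), Real.exp_pos (-160),
        pow_pos (by norm_num : (0:ℝ) < 2) n]
    linarith


-- sum of signs
lemma sum_pm {m : ℕ} (I' : Finset (Fin m)) (s : Fin m → Bool) :
    ∑ i ∈ I', (if s i then (1:ℝ) else -1)
      = 2*((I'.filter (fun i => s i = true)).card : ℝ) - I'.card := by
  rw [← Finset.sum_filter_add_sum_filter_not I' (fun i => s i = true)]
  have h1 : ∑ i ∈ I'.filter (fun i => s i = true), (if s i then (1:ℝ) else -1)
      = (I'.filter (fun i => s i = true)).card := by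
    rw [Finset.sum_congr rfl (fun i hi => if_pos (by
      have := (Finset.mem_filter.mp hi).2; exact this))]
    simp
  have h2 : ∑ i ∈ I'.filter (fun i => ¬ (s i = true)), (if s i then (1:ℝ) else -1)
      = -((I'.filter (fun i => ¬ (s i = true))).card : ℝ) := by
    rw [Finset.sum_congr rfl (fun i hi => if_neg (by
      have := (Finset.mem_filter.mp hi).2; exact this))]
    simp
  rw [h1, h2]
  have h3 := Finset.card_filter_add_card_filter_not
    (s := I') (p := fun i => s i = true)
  have h4 : ((I'.filter (fun i => s i = true)).card : ℝ)
      + ((I'.filter (fun i => ¬ (s i = true))).card : ℝ) = (I'.card : ℝ) := by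
    exact_mod_cast congrArg (Nat.cast (R := ℝ)) h3
  linarith

-- recovery of the pair from the constructed function
lemma recover {m : ℕ} (I' : Finset (Fin m)) (B C : Finset (Fin m))
    (hB : B ⊆ I') (hC : C ⊆ univ \ I') :
    I'.filter (fun i => (decide (i ∈ B ∨ i ∈ C)) = true) = B
    ∧ (univ \ I').filter (fun i => (decide (i ∈ B ∨ i ∈ C)) = true) = C := by
  constructor
  · ext i
    simp only [Finset.mem_filter, decide_eq_true_eq]
    constructor
    · rintro ⟨hi, (h|h)⟩
      · exact h
      · exact absurd (Finset.mem_sdiff.mp (hC h)).2 (fun hh => hh hi)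
    · intro h; exact ⟨hB h, Or.inl h⟩
  · ext i
    simp only [Finset.mem_filter, decide_eq_true_eq]
    constructor
    · rintro ⟨hi, (h|h)⟩
      · exact absurd (Finset.mem_sdiff.mp hi).2 (fun hh => hh (hB h))
      · exact h
    · intro h; exact ⟨hC h, Or.inr h⟩

/-- For a uniform random sign vector `ε ∈ {−1,1}^m`, `I' ⊆ {1,…,m}` with
`|I'| ≥ 2(u²+1)` and `a > 0`, with probability at least `c₁exp(−c₂u²)` one has
`|(1/√m)∑_{i∈I'} a εᵢ| ≥ c₃ a u √(|I'|/(2m))`, where `c₁, c₂, c₃` are absolute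
constants. -/
theorem stmt19 :
    ∃ c₁ c₂ c₃ : ℝ, 0 < c₁ ∧ 0 < c₂ ∧ 0 < c₃ ∧
      ∀ (m : ℕ) (I' : Finset (Fin m)) (u a : ℝ), 0 < u → 0 < a →
        2 * (u ^ 2 + 1) ≤ (I'.card : ℝ) →
        c₁ * Real.exp (-(c₂ * u ^ 2)) ≤
          (({s : Fin m → Bool |
            c₃ * a * u * Real.sqrt ((I'.card : ℝ) / (2 * m)) ≤
              |(1 / Real.sqrt m) * ∑ i ∈ I', a * (if s i then (1 : ℝ) else -1)|}).ncard : ℝ)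
            / 2 ^ m := by
  refine ⟨(3/8) * Real.exp (-160), 16, 1, by positivity, by norm_num, by norm_num, ?_⟩
  intro m I' u a hu ha hcard
  set n := I'.card with hn
  have hn2 : 2 ≤ (n:ℝ) := by nlinarith
  have hnm : n ≤ m := le_trans (Finset.card_le_univ I') (by simp)
  have hm1 : 1 ≤ m := by
    rcases Nat.eq_zero_or_pos m with h|h
    · exfalso; subst h; have : n ≤ 0 := hnm; have : (n:ℝ) ≤ 0 := by exact_mod_cast this
      linarith
    · exact h
  have hmR : (0:ℝ) < m := by exact_mod_cast hm1
  have hsm : 0 < Real.sqrt m := Real.sqrt_pos.mpr hmR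
  set E := {s : Fin m → Bool |
      (1:ℝ) * a * u * Real.sqrt ((n : ℝ) / (2 * m)) ≤
        |(1 / Real.sqrt m) * ∑ i ∈ I', a * (if s i then (1 : ℝ) else -1)|} with hE
  -- the finset of good functions
  set D : Finset (Fin m → Bool) :=
    ((I'.powerset.filter (fun B : Finset (Fin m) => u * Real.sqrt ((n:ℝ)/2) ≤ |2*((B.card):ℝ) - (n:ℝ)|)) ×ˢ (univ \ I').powerset).image
      (fun p => fun i => decide (i ∈ p.1 ∨ i ∈ p.2)) with hD
  -- D ⊆ E
  have hDE : ↑D ⊆ E := by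
    intro s hs
    obtain ⟨p, hp, rfl⟩ := Finset.mem_image.mp hs
    obtain ⟨hp1, hp2⟩ := Finset.mem_product.mp hp
    have hB := Finset.mem_filter.mp hp1
    have hBsub := Finset.mem_powerset.mp hB.1
    have hPB := hB.2
    have hCsub := Finset.mem_powerset.mp hp2
    have hrec := (recover I' p.1 p.2 hBsub hCsub).1
    simp only [hE, Set.mem_setOf_eq]
    have hsum : ∑ i ∈ I', a * (if (decide (i ∈ p.1 ∨ i ∈ p.2) : Bool) then (1:ℝ) else -1)
        = a * (2*(p.1.card : ℝ) - n) := by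
      rw [← Finset.mul_sum, sum_pm I' (fun i => decide (i ∈ p.1 ∨ i ∈ p.2)), hrec]
    rw [hsum]
    have habs : |(1 / Real.sqrt m) * (a * (2*(p.1.card:ℝ) - n))|
        = (1 / Real.sqrt m) * a * |2*(p.1.card:ℝ) - n| := by
      rw [abs_mul, abs_mul, abs_of_nonneg (by positivity : (0:ℝ) ≤ 1 / Real.sqrt m),
        abs_of_nonneg ha.le]
      ring
    rw [habs]
    have hsqrt : Real.sqrt ((n:ℝ)/(2*m)) = Real.sqrt ((n:ℝ)/2) / Real.sqrt m := by
      rw [show (n:ℝ)/(2*m) = ((n:ℝ)/2)/m by ring, Real.sqrt_div (by positivity)]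
    rw [hsqrt]
    have := hPB
    calc (1:ℝ) * a * u * (Real.sqrt ((n:ℝ)/2) / Real.sqrt m)
        = (u * Real.sqrt ((n:ℝ)/2)) * a / Real.sqrt m := by ring
      _ ≤ |2*(p.1.card:ℝ) - n| * a / Real.sqrt m := by
          gcongr
      _ = 1 / Real.sqrt m * a * |2*(p.1.card:ℝ) - n| := by ring
  -- injectivity and cardinality of D
  have hinj : Set.InjOn (fun p : Finset (Fin m) × Finset (Fin m) =>
      (fun i => decide (i ∈ p.1 ∨ i ∈ p.2)))
      ↑((I'.powerset.filter (fun B : Finset (Fin m) => u * Real.sqrt ((n:ℝ)/2) ≤ |2*((B.card):ℝ) - (n:ℝ)|)) ×ˢ (univ \ I').powerset) := by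
    intro p hp q hq hpq
    simp only [Finset.coe_product, Set.mem_prod, Finset.mem_coe] at hp hq
    have hp1 := Finset.mem_powerset.mp (Finset.mem_filter.mp hp.1).1
    have hp2 := Finset.mem_powerset.mp hp.2
    have hq1 := Finset.mem_powerset.mp (Finset.mem_filter.mp hq.1).1
    have hq2 := Finset.mem_powerset.mp hq.2
    have rp := recover I' p.1 p.2 hp1 hp2
    have rq := recover I' q.1 q.2 hq1 hq2
    have hpq' : (fun i => decide (i ∈ p.1 ∨ i ∈ p.2))
        = (fun i => decide (i ∈ q.1 ∨ i ∈ q.2)) := hpq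
    have hpt : ∀ i, decide (i ∈ p.1 ∨ i ∈ p.2) = decide (i ∈ q.1 ∨ i ∈ q.2) :=
      fun i => congrFun hpq' i
    have e1 : p.1 = q.1 := by
      rw [← rp.1, ← rq.1]; exact Finset.filter_congr (fun i _ => by rw [hpt i])
    have e2 : p.2 = q.2 := by
      rw [← rp.2, ← rq.2]; exact Finset.filter_congr (fun i _ => by rw [hpt i])
    exact Prod.ext e1 e2
  have hDcard : D.card
      = (I'.powerset.filter (fun B : Finset (Fin m) => u * Real.sqrt ((n:ℝ)/2) ≤ |2*((B.card):ℝ) - (n:ℝ)|)).card * 2^(m - n) := by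
    rw [hD, Finset.card_image_of_injOn hinj, Finset.card_product, Finset.card_powerset,
      Finset.card_sdiff_of_subset (Finset.subset_univ I'), Finset.card_univ, Fintype.card_fin]
  -- binomial lower bound on the count of good subsets
  have hcount : ∑ k ∈ (range (n+1)).filter (fun k : ℕ => u * Real.sqrt ((n:ℝ)/2) ≤ |2*(k:ℝ) - (n:ℝ)|), n.choose k
      ≤ (I'.powerset.filter (fun B : Finset (Fin m) => u * Real.sqrt ((n:ℝ)/2) ≤ |2*((B.card):ℝ) - (n:ℝ)|)).card := by
    have hsubset : ((range (n+1)).filter (fun k : ℕ => u * Real.sqrt ((n:ℝ)/2) ≤ |2*(k:ℝ) - (n:ℝ)|)).biUnion (fun k => I'.powersetCard k)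
        ⊆ I'.powerset.filter (fun B : Finset (Fin m) => u * Real.sqrt ((n:ℝ)/2) ≤ |2*((B.card):ℝ) - (n:ℝ)|) := by
      intro B hB
      obtain ⟨k, hk, hBk⟩ := Finset.mem_biUnion.mp hB
      have hk2 := Finset.mem_filter.mp hk
      have h3 := Finset.mem_powersetCard.mp hBk
      refine Finset.mem_filter.mpr ⟨Finset.mem_powerset.mpr h3.1, ?_⟩
      rw [h3.2]; exact hk2.2
    calc ∑ k ∈ (range (n+1)).filter (fun k : ℕ => u * Real.sqrt ((n:ℝ)/2) ≤ |2*(k:ℝ) - (n:ℝ)|), n.choose k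
        = ∑ k ∈ (range (n+1)).filter (fun k : ℕ => u * Real.sqrt ((n:ℝ)/2) ≤ |2*(k:ℝ) - (n:ℝ)|), (I'.powersetCard k).card := by
          apply Finset.sum_congr rfl
          intro k _; rw [Finset.card_powersetCard]
      _ = (((range (n+1)).filter (fun k : ℕ => u * Real.sqrt ((n:ℝ)/2) ≤ |2*(k:ℝ) - (n:ℝ)|)).biUnion (fun k => I'.powersetCard k)).card := by
          rw [Finset.card_biUnion]
          intro x _ y _ hxy
          rw [Function.onFun, Finset.disjoint_left]
          intro B hBx hBy
          have h1 := (Finset.mem_powersetCard.mp hBx).2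
          have h2 := (Finset.mem_powersetCard.mp hBy).2
          exact hxy (h1 ▸ h2 ▸ rfl)
      _ ≤ _ := Finset.card_le_card hsubset
  -- E has at least D.card elements
  have hEcard : (D.card : ℝ) ≤ (E.ncard : ℝ) := by
    have := Set.ncard_le_ncard hDE (Set.toFinite E)
    rw [Set.ncard_coe_finset] at this
    exact_mod_cast this
  -- final assembly
  have hcore := core n u hu hcard
  have h2m : (0:ℝ) < 2^m := by positivity
  rw [le_div_iff₀ h2m]
  have hsum_cast : ((∑ k ∈ (range (n+1)).filter (fun k : ℕ => u * Real.sqrt ((n:ℝ)/2) ≤ |2*(k:ℝ) - (n:ℝ)|), n.choose k : ℕ) : ℝ)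
      = ∑ k ∈ (range (n+1)).filter (fun k : ℕ => u * Real.sqrt ((n:ℝ)/2) ≤ |2*(k:ℝ) - (n:ℝ)|), (n.choose k : ℝ) := by push_cast; rfl
  have hchain : (3/8) * Real.exp (-160) * Real.exp (-((16:ℝ)*u^2)) * 2^m
      ≤ (D.card : ℝ) := by
    have hpow : (2:ℝ)^m = 2^n * 2^(m-n) := by
      rw [← pow_add]
      congr 1
      omega
    rw [hDcard, hpow]
    push_cast
    have hfil : ((∑ k ∈ (range (n+1)).filter (fun k : ℕ => u * Real.sqrt ((n:ℝ)/2) ≤ |2*(k:ℝ) - (n:ℝ)|), n.choose k : ℕ):ℝ) * 2^(m-n)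
        ≤ ((I'.powerset.filter (fun B : Finset (Fin m) => u * Real.sqrt ((n:ℝ)/2) ≤ |2*((B.card):ℝ) - (n:ℝ)|)).card : ℝ) * 2^(m-n) := by
      apply mul_le_mul_of_nonneg_right _ (by positivity)
      exact_mod_cast hcount
    calc (3/8) * Real.exp (-160) * Real.exp (-((16:ℝ)*u^2)) * (2^n * 2^(m-n))
        = ((3/8) * Real.exp (-160) * Real.exp (-((16:ℝ)*u^2)) * 2^n) * 2^(m-n) := by ring
      _ ≤ (∑ k ∈ (range (n+1)).filter (fun k : ℕ => u * Real.sqrt ((n:ℝ)/2) ≤ |2*(k:ℝ) - (n:ℝ)|), (n.choose k : ℝ)) * 2^(m-n) := by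
          apply mul_le_mul_of_nonneg_right hcore (by positivity)
      _ ≤ ((I'.powerset.filter (fun B : Finset (Fin m) => u * Real.sqrt ((n:ℝ)/2) ≤ |2*((B.card):ℝ) - (n:ℝ)|)).card : ℝ) * 2^(m-n) := by
          rw [← hsum_cast]; exact_mod_cast hfil
  exact le_trans hchain hEcard
end
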